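/- Theorem 1, case σ > 0, merit-function bound: Suppose Assumptions 1, 2 and 4 hold with parameter σ > 0, and run the OptDE algorithm with this σ for K ≥ 1 iterations. Then the returned best iterate w̃_K satisfies, for every D > 0, sup{ ⟨F(w̃_K), w̃_K − w⟩ : w ∈ 𝒲, ‖w̃_K − w‖ ≤ D } ≤ C_0 D ‖w_0 − w*‖ √(L / (A_{K−1} + a_1)), where C_0 = (1 + δ/(αγ)) √(8α/γ), a_1 = αγ/L, A_{K−1} = (1/σ)((1 + αγσ/L)^{K−1} − 1), and w* is the σ-weak solution from Assumption 4. -/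

import Mathlib

open scoped RealInnerProductSpace
open Finset MeasureTheory

/-- `Vec d` is the ambient space `ℝ^d` with its standard inner product. -/
abbrev Vec (d : ℕ) := EuclideanSpace ℝ (Fin d)

/-- The dual norm `‖y‖_* = sup_{nrm x ≤ 1} ⟪x, y⟫` of a (general) norm `nrm` on `ℝ^d`. -/
noncomputable def dualNorm {d : ℕ} (nrm : Vec d → ℝ) (y : Vec d) : ℝ :=
  sSup ((fun x => (⟪x, y⟫ : ℝ)) '' {x | nrm x ≤ 1})

/-- The Bregman divergence `V_v(w) = ½‖w‖² − ½‖v‖² − ⟪∇½‖v‖², w − v⟫` of `½ nrm²`,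
where `g` is the gradient map of `½ nrm²`. -/
noncomputable def breg {d : ℕ} (nrm : Vec d → ℝ) (g : Vec d → Vec d) (v w : Vec d) : ℝ :=
  nrm w ^ 2 / 2 - nrm v ^ 2 / 2 - ⟪g v, w - v⟫

/-!
The dual-averaging objective is `(1 + σAₖ)γ`-strongly convex, so its minimum value `Φₖ(zₖ)`
grows at each step by the new linear-plus-quadratic model term at `w_{j+1}` and by
`γ/16 (1 + σAⱼ) ρⱼ²`, where `ρⱼ = ‖w_{j+1} - zⱼ‖ + ‖wⱼ - zⱼ‖`: the Lipschitz error of the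
extrapolation is absorbed by Young's inequality, which is where `α ≤ 1/(4√2)` enters.
Since `z_K` minimizes `Φ_K`, comparing with `Φ_K(w*)` and using that the σ-weak solution `w*`
makes each model term smaller than at `w_{j+1}` gives `γ/16 ∑ (1 + σAⱼ) ρⱼ² ≤ ‖w* - w₀‖²/(2γ)`.
As `∑_{j<K} (1 + σAⱼ) = L A_K/(αγ)`, the best iterate has `L ρ ≤ √(8α/γ) ‖w* - w₀‖ √(L/A_K)`,
and the optimality condition of the extrapolation step bounds `⟪F w̃, w̃ - w⟫` by
`(1 + δ/(αγ)) D L ρ`.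
-/

theorem Seminorm.exists_pos_mul_norm_le {E : Type*} [NormedAddCommGroup E] [NormedSpace ℝ E]
    [FiniteDimensional ℝ E] (p : Seminorm ℝ E) (hp : ∀ x, x ≠ 0 → 0 < p x) :
    ∃ c > 0, ∀ x, c * ‖x‖ ≤ p x := by
  rcases subsingleton_or_nontrivial E with hE | hE
  · exact ⟨1, one_pos, fun x => by simp [Subsingleton.elim x 0]⟩
  have hcont : Continuous p :=
    continuousOn_univ.mp (p.convexOn.continuousOn isOpen_univ)
  obtain ⟨m, hm, hmin⟩ := (isCompact_sphere (0 : E) 1).exists_isMinOn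
    (NormedSpace.sphere_nonempty.mpr zero_le_one) hcont.continuousOn
  have hm0 : m ≠ 0 := ne_zero_of_mem_unit_sphere ⟨m, hm⟩
  refine ⟨p m, hp m hm0, fun x => ?_⟩
  rcases eq_or_ne x 0 with rfl | hx
  · simp
  have hxn : ‖x‖ ≠ 0 := norm_ne_zero_iff.mpr hx
  have hunit : ‖x‖⁻¹ • x ∈ Metric.sphere (0 : E) 1 := by
    simp [norm_smul, inv_mul_cancel₀ hxn]
  calc p m * ‖x‖ ≤ p (‖x‖⁻¹ • x) * ‖x‖ := by gcongr; exact hmin hunit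
    _ = p x := by rw [map_smul_eq_mul, norm_inv, norm_norm]; field_simp

section DualNorm

variable {d : ℕ}

theorem inner_le_mul_dualNorm {p : Seminorm ℝ (Vec d)} (hp : ∀ x, x ≠ 0 → 0 < p x)
    (x y : Vec d) : ⟪x, y⟫ ≤ p x * dualNorm p y := by
  -- `dualNorm` is an `sSup`, which means nothing unless the set is bounded above.
  obtain ⟨c, hc, hlow⟩ := p.exists_pos_mul_norm_le hp
  have hbdd : BddAbove ((fun x => ⟪x, y⟫) '' {x | p x ≤ 1}) := by
    refine ⟨‖y‖ / c, ?_⟩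
    rintro _ ⟨x, hx, rfl⟩
    have hx' : ‖x‖ ≤ 1 / c := by rw [le_div_iff₀ hc, mul_comm]; exact (hlow x).trans hx
    calc ⟪x, y⟫ ≤ ‖x‖ * ‖y‖ := real_inner_le_norm x y
      _ ≤ 1 / c * ‖y‖ := by gcongr
      _ = ‖y‖ / c := by ring
  rcases eq_or_ne x 0 with rfl | hx
  · simp
  have hpx := hp x hx
  have hunit : (p x)⁻¹ • x ∈ {x | p x ≤ 1} := by
    simp [map_smul_eq_mul, abs_of_pos hpx, inv_mul_cancel₀ hpx.ne']
  have : ⟪(p x)⁻¹ • x, y⟫ ≤ dualNorm p y := le_csSup hbdd ⟨_, hunit, rfl⟩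
  rwa [real_inner_smul_left, inv_mul_le_iff₀ hpx] at this

theorem inner_le_of_dualNorm_le {p : Seminorm ℝ (Vec d)} (hp : ∀ x, x ≠ 0 → 0 < p x)
    {y : Vec d} {M : ℝ} (hy : dualNorm p y ≤ M) (x : Vec d) : ⟪x, y⟫ ≤ p x * M :=
  (inner_le_mul_dualNorm hp x y).trans (mul_le_mul_of_nonneg_left hy (apply_nonneg p x))

end DualNorm

section Optimality

variable {E : Type*} [NormedAddCommGroup E] [InnerProductSpace ℝ E]
  {N : E → ℝ} {g : E → E} {γ : ℝ}

theorem inner_gradient_sub_le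
    (hstrong : ∀ v x, N v ^ 2 / 2 + ⟪g v, x - v⟫ + γ / 2 * N (x - v) ^ 2 ≤ N x ^ 2 / 2)
    (x u z : E) :
    ⟪g (x - z), u - x⟫ ≤ N (u - z) ^ 2 / 2 - N (x - z) ^ 2 / 2 - γ / 2 * N (u - x) ^ 2 := by
  have h := hstrong (x - z) (u - z)
  rw [sub_sub_sub_cancel_right] at h
  linarith

variable [CompleteSpace E]

theorem hasFDerivAt_inner_add_mul_sq
    (hgrad : ∀ x, HasGradientAt (fun v => N v ^ 2 / 2) (g x) x) (c z x : E) (r : ℝ) :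
    HasFDerivAt (fun y => ⟪c, y⟫ + r * N (y - z) ^ 2)
      (innerSL ℝ c + (2 * r) • InnerProductSpace.toDual ℝ E (g (x - z))) x := by
  have hsq := (hgrad (x - z)).hasFDerivAt.comp x (hasFDerivAt_sub_const (𝕜 := ℝ) z)
  rw [ContinuousLinearMap.comp_id] at hsq
  have h : HasFDerivAt (fun y => ⟪c, y⟫ + 2 * r * (N (y - z) ^ 2 / 2))
      (innerSL ℝ c + (2 * r) • InnerProductSpace.toDual ℝ E (g (x - z))) x :=
    (innerSL ℝ c).hasFDerivAt.add (hsq.const_mul (2 * r))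
  convert h using 2 with y
  ring

variable {s : Set E} {c z x u : E} {r : ℝ}

theorem IsMinOn.inner_add_inner_gradient_nonneg
    (hgrad : ∀ x, HasGradientAt (fun v => N v ^ 2 / 2) (g x) x)
    (hmin : IsMinOn (fun y => ⟪c, y⟫ + r * N (y - z) ^ 2) s x) (hs : Convex ℝ s) (hx : x ∈ s)
    (hu : u ∈ s) : 0 ≤ ⟪c, u - x⟫ + 2 * r * ⟪g (x - z), u - x⟫ := by
  have h := hmin.localize.hasFDerivWithinAt_nonneg
    (hasFDerivAt_inner_add_mul_sq hgrad c z x r).hasFDerivWithinAt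
    (sub_mem_posTangentConeAt_of_segment_subset (hs.segment_subset hx hu))
  simpa only [add_apply, smul_apply, innerSL_apply_apply, InnerProductSpace.toDual_apply_apply,
    smul_eq_mul] using h

theorem IsMinOn.quadratic_growth
    (hgrad : ∀ x, HasGradientAt (fun v => N v ^ 2 / 2) (g x) x)
    (hstrong : ∀ v x, N v ^ 2 / 2 + ⟪g v, x - v⟫ + γ / 2 * N (x - v) ^ 2 ≤ N x ^ 2 / 2)
    (hmin : IsMinOn (fun y => ⟪c, y⟫ + r * N (y - z) ^ 2) s x) (hs : Convex ℝ s) (hx : x ∈ s)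
    (hr : 0 ≤ r) (hu : u ∈ s) :
    ⟪c, x⟫ + r * N (x - z) ^ 2 + r * γ * N (u - x) ^ 2 ≤ ⟪c, u⟫ + r * N (u - z) ^ 2 := by
  have hvi := hmin.inner_add_inner_gradient_nonneg hgrad hs hx hu
  have := mul_le_mul_of_nonneg_left (inner_gradient_sub_le hstrong x u z) hr
  rw [inner_sub_right] at hvi
  nlinarith

end Optimality

theorem sq_le_of_le_one_div_four_mul_sqrt_two {α : ℝ} (h0 : 0 ≤ α) (h : α ≤ 1 / (4 * √2)) :
    α ^ 2 ≤ 1 / 32 :=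
  calc α ^ 2 ≤ (1 / (4 * √2)) ^ 2 := pow_le_pow_left₀ h0 h 2
    _ = 1 / 32 := by rw [div_pow, mul_pow, Real.sq_sqrt (by norm_num)]; norm_num

theorem mul_le_sqrt_mul_mul_sqrt_div {L A X C n r : ℝ} (hL : 0 < L) (hX : 0 < X) (hXA : X ≤ A)
    (hC : 0 ≤ C) (hn : 0 ≤ n) (hr : 0 ≤ r) (h : L * A * r ^ 2 ≤ C * n ^ 2) :
    L * r ≤ √C * n * √(L / X) := by
  have hsq : (L * r) ^ 2 ≤ C * n ^ 2 * (L / X) := by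
    rw [mul_div_assoc', le_div_iff₀ hX]
    have : L * X * r ^ 2 ≤ L * A * r ^ 2 := by gcongr
    nlinarith
  calc L * r = √((L * r) ^ 2) := (Real.sqrt_sq (by positivity)).symm
    _ ≤ √(C * n ^ 2 * (L / X)) := Real.sqrt_le_sqrt hsq
    _ = √C * n * √(L / X) := by
      rw [Real.sqrt_mul (by positivity), Real.sqrt_mul hC, Real.sqrt_sq hn]

theorem young_residual_le {α γ b s q r₁ r₂ t : ℝ} (hγ : 0 < γ) (hγ1 : γ ≤ 1)
    (hα : α ^ 2 ≤ 1 / 32) (hb : 0 ≤ b) (hs : 0 ≤ s) (ht : 0 ≤ t) (htr : t ≤ r₁ + r₂) :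
    γ / 4 * (b + s) * q ^ 2 - γ / 4 * b * r₂ ^ 2 + γ / 16 * b * (r₁ + r₂) ^ 2 ≤
      b / 2 * r₁ ^ 2 + (γ * b / 2 + s / 2) * q ^ 2 - α * γ * b * q * t := by
  have hγb : 0 ≤ γ * b := by positivity
  have hyoung : α * q * t ≤ q ^ 2 / 4 + α ^ 2 * t ^ 2 := by nlinarith [sq_nonneg (q / 2 - α * t)]
  have ht2 : t ^ 2 ≤ (r₁ + r₂) ^ 2 := pow_le_pow_left₀ ht htr 2
  have hsum2 : (r₁ + r₂) ^ 2 ≤ 2 * (r₁ ^ 2 + r₂ ^ 2) := by nlinarith [sq_nonneg (r₁ - r₂)]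
  have hαt := mul_le_mul_of_nonneg_right hα (sq_nonneg t)
  have hsq : 0 ≤ (1 / 2 - γ / 4) * (s * q ^ 2) := by
    have : 0 ≤ 1 / 2 - γ / 4 := by linarith
    positivity
  have hr₁ : 0 ≤ (1 / 2 - 3 * γ / 16) * (b * r₁ ^ 2) := by
    have : 0 ≤ 1 / 2 - 3 * γ / 16 := by linarith
    positivity
  have hr₂ : 0 ≤ γ * b * r₂ ^ 2 := by positivity
  nlinarith [mul_le_mul_of_nonneg_left hyoung hγb, mul_le_mul_of_nonneg_left hαt hγb,
    mul_le_mul_of_nonneg_left ht2 hγb, mul_le_mul_of_nonneg_left hsum2 hγb]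

structure IsOptDEStepSizes (L γ α σ : ℝ) (a A : ℕ → ℝ) : Prop where
  A_zero : A 0 = 0
  a_succ : ∀ j, a (j + 1) = α * γ * (1 + σ * A j) / L
  A_succ : ∀ j, A (j + 1) = A j + a (j + 1)

namespace IsOptDEStepSizes

variable {L γ α σ : ℝ} {a A : ℕ → ℝ} (h : IsOptDEStepSizes L γ α σ a A)
  (hL : 0 < L) (hγ : 0 < γ) (hα : 0 < α) (hσ : 0 ≤ σ)
include h hL hγ hα hσ

theorem A_nonneg (j : ℕ) : 0 ≤ A j := by
  induction j with
  | zero => exact h.A_zero.ge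
  | succ j ih =>
    rw [h.A_succ, h.a_succ]
    have : 0 ≤ σ * A j := mul_nonneg hσ ih
    positivity

theorem one_le (j : ℕ) : 1 ≤ 1 + σ * A j :=
  le_add_of_nonneg_right (mul_nonneg hσ (h.A_nonneg hL hγ hα hσ j))

theorem a_pos (j : ℕ) : 0 < a (j + 1) := by
  rw [h.a_succ]
  have := h.one_le hL hγ hα hσ j
  positivity

omit hL hγ hα hσ in
theorem sum_a (K : ℕ) : ∑ j ∈ range K, a (j + 1) = A K := by
  have h' : ∀ j, a (j + 1) = A (j + 1) - A j := fun j => by rw [h.A_succ]; ring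
  simp_rw [h', sum_range_sub, h.A_zero, sub_zero]

omit hσ in
theorem sum_one_add_mul (K : ℕ) : ∑ j ∈ range K, (1 + σ * A j) = L / (α * γ) * A K := by
  have h' : ∀ j, 1 + σ * A j = L / (α * γ) * a (j + 1) := fun j => by
    rw [h.a_succ]; field_simp
  simp_rw [h', ← mul_sum, h.sum_a]

theorem A_pred_add_a_one_le {K : ℕ} (hK : 1 ≤ K) : A (K - 1) + a 1 ≤ A K := by
  obtain ⟨m, rfl⟩ := Nat.exists_eq_add_of_le' hK
  rw [Nat.add_sub_cancel, h.A_succ m, add_le_add_iff_left, h.a_succ, h.a_succ, h.A_zero]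
  have := h.A_nonneg hL hγ hα hσ m
  gcongr

end IsOptDEStepSizes

section OptDE

variable {d : ℕ} (F : Vec d → Vec d) (N : Vec d → ℝ) (g : Vec d → Vec d) (γ σ : ℝ)

noncomputable def regularizedModel (w₀ v x : Vec d) : ℝ :=
  ⟪F v - (σ / γ) • g (v - w₀), x⟫ + σ / (2 * γ) * N (x - w₀) ^ 2

noncomputable def dualAvgObjective (a A : ℕ → ℝ) (w : ℕ → Vec d) (k : ℕ) (x : Vec d) : ℝ :=
  ⟪∑ i ∈ Icc 1 k, a i • (F (w i) - (σ / γ) • g (w i - w 0)), x⟫ +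
    (1 + σ * A k) / (2 * γ) * N (x - w 0) ^ 2

variable {F N g γ σ}

theorem regularizedModel_le_of_weakSolution
    (hstrong : ∀ v x, N v ^ 2 / 2 + ⟪g v, x - v⟫ + γ / 2 * N (x - v) ^ 2 ≤ N x ^ 2 / 2)
    (hγ : 0 < γ) (hσ : 0 ≤ σ) {w₀ v wstar : Vec d}
    (hweak : σ / γ * (breg N g (v - w₀) (wstar - w₀) + breg N g (wstar - w₀) (v - w₀)) ≤
      ⟪F v, v - wstar⟫) :
    regularizedModel F N g γ σ w₀ v wstar ≤ regularizedModel F N g γ σ w₀ v v := by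
  have hbreg : 0 ≤ breg N g (wstar - w₀) (v - w₀) := by
    have hs := hstrong (wstar - w₀) (v - w₀)
    have : 0 ≤ γ / 2 * N (v - w₀ - (wstar - w₀)) ^ 2 := by positivity
    rw [breg]
    linarith
  have hB : breg N g (v - w₀) (wstar - w₀) =
      N (wstar - w₀) ^ 2 / 2 - N (v - w₀) ^ 2 / 2 + ⟪g (v - w₀), v - wstar⟫ := by
    rw [breg, sub_sub_sub_cancel_right, ← neg_sub v, inner_neg_right, sub_neg_eq_add]
  have hξ : ⟪F v - (σ / γ) • g (v - w₀), v⟫ - ⟪F v - (σ / γ) • g (v - w₀), wstar⟫ =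
      ⟪F v, v - wstar⟫ - σ / γ * ⟪g (v - w₀), v - wstar⟫ := by
    rw [← inner_sub_right, inner_sub_left, real_inner_smul_left]
  rw [mul_add, hB] at hweak
  have e : ∀ t : ℝ, σ / (2 * γ) * t = σ / γ * (t / 2) := fun t => by ring
  rw [regularizedModel, regularizedModel, e, e]
  linarith [mul_nonneg (div_nonneg hσ hγ.le) hbreg]

variable {a A : ℕ → ℝ} {w : ℕ → Vec d}

theorem dualAvgObjective_zero (hA : A 0 = 0) (x : Vec d) :
    dualAvgObjective F N g γ σ a A w 0 x = N (x - w 0) ^ 2 / (2 * γ) := by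
  simp [dualAvgObjective, hA, div_eq_inv_mul]

theorem dualAvgObjective_succ {k : ℕ} (hA : A (k + 1) = A k + a (k + 1)) (x : Vec d) :
    dualAvgObjective F N g γ σ a A w (k + 1) x = dualAvgObjective F N g γ σ a A w k x +
      a (k + 1) * regularizedModel F N g γ σ (w 0) (w (k + 1)) x := by
  simp only [dualAvgObjective, regularizedModel, sum_Icc_succ_top (Nat.le_add_left 1 k),
    inner_add_left, real_inner_smul_left, hA]
  ring

theorem dualAvgObjective_eq_sum {L α : ℝ} (h : IsOptDEStepSizes L γ α σ a A) (k : ℕ)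
    (x : Vec d) : dualAvgObjective F N g γ σ a A w k x = N (x - w 0) ^ 2 / (2 * γ) +
      ∑ j ∈ range k, a (j + 1) * regularizedModel F N g γ σ (w 0) (w (j + 1)) x := by
  induction k with
  | zero => simp [dualAvgObjective_zero h.A_zero]
  | succ k ih => rw [dualAvgObjective_succ (h.A_succ k), ih, sum_range_succ, add_assoc]

theorem inner_add_sq_le_regularizedModel_sub
    (hstrong : ∀ v x, N v ^ 2 / 2 + ⟪g v, x - v⟫ + γ / 2 * N (x - v) ^ 2 ≤ N x ^ 2 / 2)
    (hγ : 0 < γ) (hσ : 0 ≤ σ) (w₀ v u : Vec d) :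
    ⟪F v, u - v⟫ + σ / 2 * N (u - v) ^ 2 ≤
      regularizedModel F N g γ σ w₀ v u - regularizedModel F N g γ σ w₀ v v := by
  have h := mul_le_mul_of_nonneg_left (inner_gradient_sub_le hstrong v u w₀)
    (div_nonneg hσ hγ.le)
  have e : σ / γ * (γ / 2 * N (u - v) ^ 2) = σ / 2 * N (u - v) ^ 2 := by field_simp
  simp only [regularizedModel, inner_sub_left, inner_sub_right, real_inner_smul_left] at h ⊢
  linear_combination h - e

end OptDE

section ProxStep

variable {d : ℕ} {W : Set (Vec d)} {F g : Vec d → Vec d} {p : Seminorm ℝ (Vec d)}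
  {L γ α δ : ℝ} {v z w u : Vec d}

theorem IsMinOn.prox_inner_ge (hW : Convex ℝ W) (hp : ∀ x, x ≠ 0 → 0 < p x)
    (hgrad : ∀ x, HasGradientAt (fun v => p v ^ 2 / 2) (g x) x)
    (hstrong : ∀ v x, p v ^ 2 / 2 + ⟪g v, x - v⟫ + γ / 2 * p (x - v) ^ 2 ≤ p x ^ 2 / 2)
    (hLip : dualNorm p (F w - F v) ≤ L * p (w - v)) (hL : 0 < L) (hγ : 0 < γ) (hα : 0 ≤ α)
    (hmin : IsMinOn (fun x => ⟪(α / L) • F v, x⟫ + 1 / (2 * γ) * p (x - z) ^ 2) W w)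
    (hw : w ∈ W) (hu : u ∈ W) :
    1 / (2 * γ) * p (w - z) ^ 2 + 1 / 2 * p (u - w) ^ 2 - 1 / (2 * γ) * p (u - z) ^ 2 -
      α * p (u - w) * p (w - v) ≤ α / L * ⟪F w, u - w⟫ := by
  have hqg := hmin.quadratic_growth hgrad hstrong hW hw (by positivity) hu
  have hγ' : 1 / (2 * γ) * γ = 1 / 2 := by field_simp
  rw [real_inner_smul_left, real_inner_smul_left, hγ'] at hqg
  have hlip : -(p (u - w) * (L * p (w - v))) ≤ ⟪F w - F v, u - w⟫ := by
    have := inner_le_of_dualNorm_le hp hLip (w - u)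
    rw [map_sub_rev, ← neg_sub u w, inner_neg_left, real_inner_comm] at this
    linarith
  have hm := mul_le_mul_of_nonneg_left hlip (by positivity : 0 ≤ α / L)
  have e : α / L * (p (u - w) * (L * p (w - v))) = α * p (u - w) * p (w - v) := by
    field_simp
  have hsplit : ⟪F w, u - w⟫ = ⟪F v, u⟫ - ⟪F v, w⟫ + ⟪F w - F v, u - w⟫ := by
    simp only [inner_sub_left, inner_sub_right]; ring
  rw [hsplit]
  linarith

theorem IsMinOn.inner_le_of_prox (hW : Convex ℝ W) (hp : ∀ x, x ≠ 0 → 0 < p x)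
    (hgrad : ∀ x, HasGradientAt (fun v => p v ^ 2 / 2) (g x) x)
    (hgbound : ∀ x, dualNorm p (g x) ≤ δ * p x)
    (hLip : dualNorm p (F w - F v) ≤ L * p (w - v)) (hL : 0 < L) (hγ : 0 < γ) (hα : 0 < α)
    (hδ : 0 ≤ δ)
    (hmin : IsMinOn (fun x => ⟪(α / L) • F v, x⟫ + 1 / (2 * γ) * p (x - z) ^ 2) W w)
    (hw : w ∈ W) (hu : u ∈ W) {D : ℝ} (hD : p (w - u) ≤ D) :
    ⟪F w, w - u⟫ ≤ (1 + δ / (α * γ)) * D * (L * (p (w - z) + p (v - z))) := by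
  have hρ : p (w - v) ≤ p (w - z) + p (v - z) := by
    rw [← sub_add_sub_cancel w z v, map_sub_rev p v z]
    exact map_add_le_add p _ _
  have hD0 : 0 ≤ D := (apply_nonneg p _).trans hD
  have hvi : α / L * ⟪F v, w - u⟫ ≤ 1 / γ * ⟪g (w - z), u - w⟫ := by
    have h := hmin.inner_add_inner_gradient_nonneg hgrad hW hw hu
    have e : 2 * (1 / (2 * γ)) = 1 / γ := by field_simp
    rw [real_inner_smul_left, e, ← neg_sub w u, inner_neg_right, neg_sub] at h
    linarith
  have hg : ⟪g (w - z), u - w⟫ ≤ D * (δ * (p (w - z) + p (v - z))) := by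
    rw [real_inner_comm]
    refine (inner_le_of_dualNorm_le hp (hgbound (w - z)) (u - w)).trans ?_
    rw [map_sub_rev]
    gcongr
    exact le_add_of_nonneg_right (apply_nonneg p _)
  have hlip : ⟪F w - F v, w - u⟫ ≤ D * (L * (p (w - z) + p (v - z))) := by
    rw [real_inner_comm]
    refine (inner_le_of_dualNorm_le hp hLip (w - u)).trans ?_
    gcongr
  have hFv : ⟪F v, w - u⟫ ≤ L / (α * γ) * ⟪g (w - z), u - w⟫ := by
    calc ⟪F v, w - u⟫ = L / α * (α / L * ⟪F v, w - u⟫) := by field_simp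
      _ ≤ L / α * (1 / γ * ⟪g (w - z), u - w⟫) := mul_le_mul_of_nonneg_left hvi (by positivity)
      _ = L / (α * γ) * ⟪g (w - z), u - w⟫ := by field_simp
  calc ⟪F w, w - u⟫ = ⟪F v, w - u⟫ + ⟪F w - F v, w - u⟫ := by rw [inner_sub_left]; ring
    _ ≤ L / (α * γ) * (D * (δ * (p (w - z) + p (v - z)))) + D * (L * (p (w - z) + p (v - z))) := by
      gcongr
      exact hFv.trans (by gcongr)
    _ = (1 + δ / (α * γ)) * D * (L * (p (w - z) + p (v - z))) := by field_simp; ring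

end ProxStep

structure IsOptDE {d : ℕ} (W : Set (Vec d)) (F : Vec d → Vec d) (N : Vec d → ℝ)
    (g : Vec d → Vec d) (L γ α σ : ℝ) (a A : ℕ → ℝ) (w z : ℕ → Vec d) : Prop
    extends IsOptDEStepSizes L γ α σ a A where
  w_zero_mem : w 0 ∈ W
  z_zero : z 0 = w 0
  w_succ_mem : ∀ j, w (j + 1) ∈ W
  isMinOn_w_succ : ∀ j,
    IsMinOn (fun x => ⟪(α / L) • F (w j), x⟫ + 1 / (2 * γ) * N (x - z j) ^ 2) W (w (j + 1))
  z_succ_mem : ∀ j, z (j + 1) ∈ W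
  isMinOn_z_succ : ∀ j, IsMinOn (dualAvgObjective F N g γ σ a A w (j + 1)) W (z (j + 1))

namespace IsOptDE

variable {d : ℕ} {W : Set (Vec d)} {F g : Vec d → Vec d} {p : Seminorm ℝ (Vec d)}
  {L γ α σ : ℝ} {a A : ℕ → ℝ} {w z : ℕ → Vec d} (h : IsOptDE W F p g L γ α σ a A w z)
include h

theorem w_mem : ∀ j, w j ∈ W
  | 0 => h.w_zero_mem
  | j + 1 => h.w_succ_mem j

theorem z_mem : ∀ j, z j ∈ W
  | 0 => h.z_zero ▸ h.w_zero_mem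
  | j + 1 => h.z_succ_mem j

theorem isMinOn_z (hγ : 0 < γ) : ∀ k, IsMinOn (dualAvgObjective F p g γ σ a A w k) W (z k)
  | 0 => fun x _ => by
    simp only [Set.mem_ofPred_eq, dualAvgObjective_zero h.A_zero, h.z_zero, sub_self, map_zero]
    rw [zero_pow two_ne_zero, zero_div]
    positivity
  | k + 1 => h.isMinOn_z_succ k

variable (hW : Convex ℝ W) (hp : ∀ x, x ≠ 0 → 0 < p x)
  (hgrad : ∀ x, HasGradientAt (fun v => p v ^ 2 / 2) (g x) x)
  (hstrong : ∀ v x, p v ^ 2 / 2 + ⟪g v, x - v⟫ + γ / 2 * p (x - v) ^ 2 ≤ p x ^ 2 / 2)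
  (hLip : ∀ v ∈ W, ∀ u ∈ W, dualNorm p (F v - F u) ≤ L * p (v - u))
  (hL : 0 < L) (hγ : 0 < γ) (hγ1 : γ ≤ 1) (hα : 0 < α) (hα2 : α ^ 2 ≤ 1 / 32) (hσ : 0 ≤ σ)
include hW hp hgrad hstrong hLip hL hγ hγ1 hα hα2 hσ

/- The gain `γ/4 (1 + σA_{j+1}) p(w_{j+1} - z_{j+1})²` of step `j` pays for the extrapolation
error of step `j + 1`, hence the correction term on both sides. -/
theorem potential_step (j : ℕ) :
    dualAvgObjective F p g γ σ a A w j (z j) - γ / 4 * (1 + σ * A j) * p (w j - z j) ^ 2 +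
        a (j + 1) * regularizedModel F p g γ σ (w 0) (w (j + 1)) (w (j + 1)) +
        γ / 16 * (1 + σ * A j) * (p (w (j + 1) - z j) + p (w j - z j)) ^ 2 ≤
      dualAvgObjective F p g γ σ a A w (j + 1) (z (j + 1)) -
        γ / 4 * (1 + σ * A (j + 1)) * p (w (j + 1) - z (j + 1)) ^ 2 := by
  have hb : 1 ≤ 1 + σ * A j := h.one_le hL hγ hα hσ j
  have hdual : dualAvgObjective F p g γ σ a A w j (z j) +
      (1 + σ * A j) / 2 * p (z (j + 1) - z j) ^ 2 ≤
      dualAvgObjective F p g γ σ a A w j (z (j + 1)) := by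
    have hqg := (h.isMinOn_z hγ j).quadratic_growth (r := (1 + σ * A j) / (2 * γ)) hgrad
      hstrong hW (h.z_mem j) (by positivity) (h.z_mem (j + 1))
    have e : (1 + σ * A j) / (2 * γ) * γ = (1 + σ * A j) / 2 := by field_simp
    rwa [e] at hqg
  have hmodel := inner_add_sq_le_regularizedModel_sub (F := F) hstrong hγ hσ (w 0) (w (j + 1))
    (z (j + 1))
  have hprox := (h.isMinOn_w_succ j).prox_inner_ge hW hp hgrad hstrong
    (hLip _ (h.w_mem (j + 1)) _ (h.w_mem j)) hL hγ hα.le (h.w_succ_mem j) (h.z_succ_mem j)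
  have htri : p (w (j + 1) - w j) ≤ p (w (j + 1) - z j) + p (w j - z j) := by
    rw [← sub_add_sub_cancel (w (j + 1)) (z j) (w j), map_sub_rev p (w j) (z j)]
    exact map_add_le_add p _ _
  have hyoung := young_residual_le (b := 1 + σ * A j) (q := p (z (j + 1) - w (j + 1))) hγ hγ1
    hα2 (by linarith) (mul_nonneg hσ (h.a_pos hL hγ hα hσ j).le) (apply_nonneg p _) htri
  have ha : γ * (1 + σ * A j) * (α / L) = a (j + 1) := by rw [h.a_succ]; field_simp
  have hprox' := mul_le_mul_of_nonneg_left hprox (by positivity : 0 ≤ γ * (1 + σ * A j))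
  rw [← mul_assoc, ha] at hprox'
  have hmodel' := mul_le_mul_of_nonneg_left hmodel (h.a_pos hL hγ hα hσ j).le
  have e : γ * (1 + σ * A j) * (1 / (2 * γ)) = (1 + σ * A j) / 2 := by field_simp
  rw [dualAvgObjective_succ (h.A_succ j), h.A_succ j, map_sub_rev p (w (j + 1)) (z (j + 1))]
  nlinarith

theorem sum_residual_sq_le {wstar : Vec d} (hws : wstar ∈ W)
    (hweak : ∀ v ∈ W, σ / γ * (breg p g (v - w 0) (wstar - w 0) +
      breg p g (wstar - w 0) (v - w 0)) ≤ ⟪F v, v - wstar⟫) (K : ℕ) :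
    γ / 16 * ∑ j ∈ range K, (1 + σ * A j) * (p (w (j + 1) - z j) + p (w j - z j)) ^ 2 ≤
      p (wstar - w 0) ^ 2 / (2 * γ) := by
  set ψ : ℕ → ℝ := fun j =>
    dualAvgObjective F p g γ σ a A w j (z j) - γ / 4 * (1 + σ * A j) * p (w j - z j) ^ 2
  set M : ℕ → Vec d → ℝ := fun j => regularizedModel F p g γ σ (w 0) (w (j + 1))
  have htel : ∑ j ∈ range K, (a (j + 1) * M j (w (j + 1)) +
      γ / 16 * ((1 + σ * A j) * (p (w (j + 1) - z j) + p (w j - z j)) ^ 2)) ≤ ψ K - ψ 0 := by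
    rw [← sum_range_sub]
    refine sum_le_sum fun j _ => ?_
    have := h.potential_step hW hp hgrad hstrong hLip hL hγ hγ1 hα hα2 hσ j
    simp only [ψ, M]
    linarith
  have hψ0 : ψ 0 = 0 := by simp [ψ, dualAvgObjective_zero h.A_zero, h.z_zero]
  have hψK : ψ K ≤ p (wstar - w 0) ^ 2 / (2 * γ) + ∑ j ∈ range K, a (j + 1) * M j wstar := by
    have hmin := h.isMinOn_z hγ K hws
    rw [Set.mem_ofPred_eq, dualAvgObjective_eq_sum h.toIsOptDEStepSizes K wstar] at hmin
    have : 0 ≤ γ / 4 * (1 + σ * A K) * p (w K - z K) ^ 2 := by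
      have := h.one_le hL hγ hα hσ K
      positivity
    simp only [ψ, M]
    linarith
  have hmodel : ∑ j ∈ range K, a (j + 1) * M j wstar ≤
      ∑ j ∈ range K, a (j + 1) * M j (w (j + 1)) :=
    sum_le_sum fun j _ => mul_le_mul_of_nonneg_left
      (regularizedModel_le_of_weakSolution hstrong hγ hσ (hweak _ (h.w_mem (j + 1))))
      (h.a_pos hL hγ hα hσ j).le
  rw [sum_add_distrib, ← mul_sum] at htel
  linarith

theorem mul_A_mul_sq_le_of_forall_le {wstar : Vec d} (hws : wstar ∈ W)
    (hweak : ∀ v ∈ W, σ / γ * (breg p g (v - w 0) (wstar - w 0) +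
      breg p g (wstar - w 0) (v - w 0)) ≤ ⟪F v, v - wstar⟫) {K : ℕ} {ρ : ℝ} (hρ0 : 0 ≤ ρ)
    (hρ : ∀ j < K, ρ ≤ p (w (j + 1) - z j) + p (w j - z j)) :
    L * A K * ρ ^ 2 ≤ 8 * α / γ * p (wstar - w 0) ^ 2 := by
  have hsum := h.sum_residual_sq_le hW hp hgrad hstrong hLip hL hγ hγ1 hα hα2 hσ hws hweak K
  have hlow : ρ ^ 2 * ∑ j ∈ range K, (1 + σ * A j) ≤
      ∑ j ∈ range K, (1 + σ * A j) * (p (w (j + 1) - z j) + p (w j - z j)) ^ 2 := by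
    rw [mul_sum]
    refine sum_le_sum fun j hj => ?_
    have := h.one_le hL hγ hα hσ j
    rw [mul_comm]
    gcongr
    exact hρ j (mem_range.mp hj)
  rw [h.sum_one_add_mul hL hγ hα] at hlow
  have e : γ / 16 * (ρ ^ 2 * (L / (α * γ) * A K)) = L * A K * ρ ^ 2 / (16 * α) := by
    field_simp
  have := (mul_le_mul_of_nonneg_left hlow (by positivity : 0 ≤ γ / 16)).trans hsum
  rw [e, div_le_iff₀ (by positivity)] at this
  calc L * A K * ρ ^ 2 ≤ p (wstar - w 0) ^ 2 / (2 * γ) * (16 * α) := this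
    _ = 8 * α / γ * p (wstar - w 0) ^ 2 := by field_simp; ring

theorem mul_residual_le_of_forall_le {wstar : Vec d} (hws : wstar ∈ W)
    (hweak : ∀ v ∈ W, σ / γ * (breg p g (v - w 0) (wstar - w 0) +
      breg p g (wstar - w 0) (v - w 0)) ≤ ⟪F v, v - wstar⟫) {K : ℕ} (hK : 1 ≤ K) {ρ : ℝ}
    (hρ0 : 0 ≤ ρ) (hρ : ∀ j < K, ρ ≤ p (w (j + 1) - z j) + p (w j - z j)) :
    L * ρ ≤ √(8 * α / γ) * p (wstar - w 0) * √(L / (A (K - 1) + a 1)) :=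
  mul_le_sqrt_mul_mul_sqrt_div hL
    (add_pos_of_nonneg_of_pos (h.A_nonneg hL hγ hα hσ _) (h.a_pos hL hγ hα hσ 0))
    (h.A_pred_add_a_one_le hL hγ hα hσ hK) (by positivity) (apply_nonneg p _) hρ0
    (h.mul_A_mul_sq_le_of_forall_le hW hp hgrad hstrong hLip hL hγ hγ1 hα hα2 hσ hws hweak hρ0 hρ)

end IsOptDE

theorem optde_sigma_pos_merit_bound_general
    {d : ℕ} (W : Set (Vec d)) (hWcv : Convex ℝ W)
    (F : Vec d → Vec d) (nrm : Vec d → ℝ) (g : Vec d → Vec d)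
    (L γ δ α σ : ℝ)
    -- `nrm` is a norm on ℝ^d
    (hnrm_pos : ∀ x : Vec d, x ≠ 0 → 0 < nrm x)
    (hnrm_add : ∀ x y : Vec d, nrm (x + y) ≤ nrm x + nrm y)
    (hnrm_smul : ∀ (c : ℝ) (x : Vec d), nrm (c • x) = |c| * nrm x)
    (hL : 0 < L) (hγ0 : 0 < γ) (hγ1 : γ ≤ 1) (hδ : 0 < δ) (hσ : 0 < σ)
    -- Assumption 1
    (hLip : ∀ v ∈ W, ∀ u ∈ W, dualNorm nrm (F v - F u) ≤ L * nrm (v - u))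
    -- Assumption 2
    (hgrad : ∀ x : Vec d, HasGradientAt (fun v : Vec d => nrm v ^ 2 / 2) (g x) x)
    (hstrong : ∀ v x : Vec d,
      nrm v ^ 2 / 2 + ⟪g v, x - v⟫ + γ / 2 * nrm (x - v) ^ 2 ≤ nrm x ^ 2 / 2)
    (hgbound : ∀ x : Vec d, dualNorm nrm (g x) ≤ δ * nrm x)
    -- OptDE algorithm with parameter σ
    (hα0 : 0 < α)
    (hαle : α ≤ min (1 / (4 * Real.sqrt 2)) (Real.sqrt 3 / (4 * Real.sqrt γ)))
    (a A : ℕ → ℝ) (hA0 : A 0 = 0)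
    (ha : ∀ k, 1 ≤ k → a k = α * γ * (1 + σ * A (k - 1)) / L)
    (hArec : ∀ k, 1 ≤ k → A k = A (k - 1) + a k)
    (w z : ℕ → Vec d) (hw0W : w 0 ∈ W) (hz0 : z 0 = w 0)
    -- Assumption 4: existence of a σ-weak solution w* (w.r.t. the center w 0)
    (wstar : Vec d) (hwsW : wstar ∈ W)
    (hsweak : ∀ v ∈ W,
      σ / γ * (breg nrm g (v - w 0) (wstar - w 0) + breg nrm g (wstar - w 0) (v - w 0)) ≤
        (⟪F v, v - wstar⟫ : ℝ))
    -- extrapolation step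
    (hwk : ∀ k, 1 ≤ k → w k ∈ W ∧
      IsMinOn (fun x => (⟪(α / L) • F (w (k - 1)), x⟫ : ℝ) +
        1 / (2 * γ) * nrm (x - z (k - 1)) ^ 2) W (w k))
    -- dual averaging step
    (hzk : ∀ k, 1 ≤ k → z k ∈ W ∧
      IsMinOn (fun x =>
        (⟪∑ i ∈ Finset.Icc 1 k, a i • (F (w i) - (σ / γ) • g (w i - w 0)), x⟫ : ℝ) +
        (1 + σ * A k) / (2 * γ) * nrm (x - w 0) ^ 2) W (z k))
    (K : ℕ) (hK : 1 ≤ K)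
    -- the returned best iterate w̃_K = w kt
    (kt : ℕ) (hktmem : kt ∈ Finset.Icc 1 K)
    (hbest : ∀ k ∈ Finset.Icc 1 K,
      nrm (w kt - z (kt - 1)) + nrm (w (kt - 1) - z (kt - 1)) ≤
        nrm (w k - z (k - 1)) + nrm (w (k - 1) - z (k - 1)))
    (D : ℝ) :
    ∀ v ∈ W, nrm (w kt - v) ≤ D →
      (⟪F (w kt), w kt - v⟫ : ℝ) ≤
        ((1 + δ / (α * γ)) * Real.sqrt (8 * α / γ)) * D * nrm (w 0 - wstar) *
          Real.sqrt (L / (A (K - 1) + a 1)) := by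
  intro v hv hvD
  -- `⇑p` unfolds to `nrm`, so every hypothesis on `nrm` is one on `p`.
  let p : Seminorm ℝ (Vec d) := Seminorm.of nrm hnrm_add hnrm_smul
  have hrun : IsOptDE W F p g L γ α σ a A w z :=
    ⟨⟨hA0, fun j => ha (j + 1) j.succ_pos, fun j => hArec (j + 1) j.succ_pos⟩, hw0W, hz0,
      fun j => (hwk (j + 1) j.succ_pos).1, fun j => (hwk (j + 1) j.succ_pos).2,
      fun j => (hzk (j + 1) j.succ_pos).1, fun j => (hzk (j + 1) j.succ_pos).2⟩
  have hα2 := sq_le_of_le_one_div_four_mul_sqrt_two hα0.le (hαle.trans (min_le_left _ _))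
  obtain ⟨j, rfl⟩ : ∃ j, kt = j + 1 := ⟨kt - 1, by have := (mem_Icc.mp hktmem).1; omega⟩
  simp only [Nat.add_sub_cancel] at hbest
  have hρ : 0 ≤ nrm (w (j + 1) - z j) + nrm (w j - z j) :=
    add_nonneg (apply_nonneg p _) (apply_nonneg p _)
  have hres := hrun.mul_residual_le_of_forall_le hWcv hnrm_pos hgrad hstrong hLip hL hγ0 hγ1 hα0
    hα2 hσ.le hwsW hsweak hK hρ fun i hi => hbest (i + 1) (mem_Icc.mpr ⟨i.succ_pos, hi⟩)
  have hmerit := (hrun.isMinOn_w_succ j).inner_le_of_prox hWcv hnrm_pos hgrad hgbound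
    (hLip _ (hrun.w_mem _) _ (hrun.w_mem _)) hL hγ0 hα0 hδ.le (hrun.w_mem _) hv hvD
  have hD : 0 ≤ D := (apply_nonneg p _).trans hvD
  calc ⟪F (w (j + 1)), w (j + 1) - v⟫
      ≤ (1 + δ / (α * γ)) * D * (L * (nrm (w (j + 1) - z j) + nrm (w j - z j))) := hmerit
    _ ≤ (1 + δ / (α * γ)) * D * (√(8 * α / γ) * nrm (wstar - w 0) * √(L / (A (K - 1) + a 1))) :=
      mul_le_mul_of_nonneg_left hres (mul_nonneg (by positivity) hD)
    _ = _ := by rw [show nrm (w 0 - wstar) = nrm (wstar - w 0) from map_sub_rev p _ _]; ring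

/-- **Theorem 1, case σ > 0, merit-function bound.**
Under Assumptions 1, 2 and 4 (existence of a σ-weak solution with σ > 0), the best
iterate `w kt` returned by OptDE run with this σ for `K ≥ 1` iterations satisfies
`sup{⟪F(w̃_K), w̃_K − v⟫ : v ∈ W, ‖w̃_K − v‖ ≤ D} ≤ C₀ D ‖w₀ − w*‖ √(L / (A_{K−1} + a₁))`
with `C₀ = (1 + δ/(αγ)) √(8α/γ)`. -/
theorem optde_sigma_pos_merit_bound
    {d : ℕ} (W : Set (Vec d)) (hWne : W.Nonempty) (hWcl : IsClosed W) (hWcv : Convex ℝ W)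
    (F : Vec d → Vec d) (nrm : Vec d → ℝ) (g : Vec d → Vec d)
    (L γ δ α σ : ℝ)
    -- `nrm` is a norm on ℝ^d
    (hnrm_pos : ∀ x : Vec d, x ≠ 0 → 0 < nrm x)
    (hnrm_add : ∀ x y : Vec d, nrm (x + y) ≤ nrm x + nrm y)
    (hnrm_smul : ∀ (c : ℝ) (x : Vec d), nrm (c • x) = |c| * nrm x)
    (hL : 0 < L) (hγ0 : 0 < γ) (hγ1 : γ ≤ 1) (hδ : 0 < δ) (hσ : 0 < σ)
    -- Assumption 1
    (hLip : ∀ v ∈ W, ∀ u ∈ W, dualNorm nrm (F v - F u) ≤ L * nrm (v - u))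
    -- Assumption 2
    (hgrad : ∀ x : Vec d, HasGradientAt (fun v : Vec d => nrm v ^ 2 / 2) (g x) x)
    (hstrong : ∀ v x : Vec d,
      nrm v ^ 2 / 2 + ⟪g v, x - v⟫ + γ / 2 * nrm (x - v) ^ 2 ≤ nrm x ^ 2 / 2)
    (hgbound : ∀ x : Vec d, dualNorm nrm (g x) ≤ δ * nrm x)
    -- OptDE algorithm with parameter σ
    (hα0 : 0 < α)
    (hαle : α ≤ min (1 / (4 * Real.sqrt 2)) (Real.sqrt 3 / (4 * Real.sqrt γ)))
    (a A : ℕ → ℝ) (hA0 : A 0 = 0)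
    (ha : ∀ k, 1 ≤ k → a k = α * γ * (1 + σ * A (k - 1)) / L)
    (hArec : ∀ k, 1 ≤ k → A k = A (k - 1) + a k)
    (w z : ℕ → Vec d) (hw0W : w 0 ∈ W) (hz0 : z 0 = w 0)
    -- Assumption 4: existence of a σ-weak solution w* (w.r.t. the center w 0)
    (wstar : Vec d) (hwsW : wstar ∈ W)
    (hsweak : ∀ v ∈ W,
      σ / γ * (breg nrm g (v - w 0) (wstar - w 0) + breg nrm g (wstar - w 0) (v - w 0)) ≤
        (⟪F v, v - wstar⟫ : ℝ))
    -- extrapolation step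
    (hwk : ∀ k, 1 ≤ k → w k ∈ W ∧
      IsMinOn (fun x => (⟪(α / L) • F (w (k - 1)), x⟫ : ℝ) +
        1 / (2 * γ) * nrm (x - z (k - 1)) ^ 2) W (w k))
    -- dual averaging step
    (hzk : ∀ k, 1 ≤ k → z k ∈ W ∧
      IsMinOn (fun x =>
        (⟪∑ i ∈ Finset.Icc 1 k, a i • (F (w i) - (σ / γ) • g (w i - w 0)), x⟫ : ℝ) +
        (1 + σ * A k) / (2 * γ) * nrm (x - w 0) ^ 2) W (z k))
    (K : ℕ) (hK : 1 ≤ K)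
    -- the returned best iterate w̃_K = w kt
    (kt : ℕ) (hktmem : kt ∈ Finset.Icc 1 K)
    (hbest : ∀ k ∈ Finset.Icc 1 K,
      nrm (w kt - z (kt - 1)) + nrm (w (kt - 1) - z (kt - 1)) ≤
        nrm (w k - z (k - 1)) + nrm (w (k - 1) - z (k - 1)))
    (D : ℝ) (hD : 0 < D) :
    ∀ v ∈ W, nrm (w kt - v) ≤ D →
      (⟪F (w kt), w kt - v⟫ : ℝ) ≤
        ((1 + δ / (α * γ)) * Real.sqrt (8 * α / γ)) * D * nrm (w 0 - wstar) *
          Real.sqrt (L / (A (K - 1) + a 1)) :=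
  optde_sigma_pos_merit_bound_general W hWcv F nrm g L γ δ α σ hnrm_pos hnrm_add hnrm_smul hL hγ0
    hγ1 hδ hσ hLip hgrad hstrong hgbound hα0 hαle a A hA0 ha hArec w z hw0W hz0 wstar hwsW hsweak
    hwk hzk K hK kt hktmem hbest D
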